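/- arXiv:2303.01501 — 2 statements merged into one kernel-verified Lean document; each statement's English description precedes it below -/
import Mathlib

section
/- For P' = {a, b, c, d} with a = (−1,0), b = (1/2, √3/2), c = (1/2, −√3/2), d = (1−x, 0) and 0 < x < 2 − √3, consider the filtered simplicial complex K with simplices a, b, c, d (at scale 0), edges bd, cd (at scale √(1−x+x²)), edges ab, ac (at scale √3), edge ad (at scale 2−x), and triangles abd, acd (at scale 2−x). Then the first simplicial homology (over ℤ/2) of the sublevel complex at scale t is: trivial for t < √3; one-dimensional (generated by the cycle ab + bd + cd + ac) for √3 ≤ t < 2 − x; and trivial for t ≥ 2 − x. -/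
attribute [local instance] Classical.propDecidable

open Finset

/-- The mod-2 boundary of a single simplex on the vertex set `Fin 4`. -/
noncomputable def simplexBoundary (σ : Finset (Fin 4)) : Finset (Fin 4) →₀ ZMod 2 :=
  ∑ v ∈ σ, Finsupp.single (σ.erase v) (1 : ZMod 2)

/-- The mod-2 boundary map on chains. -/
noncomputable def boundaryMap : (Finset (Fin 4) →₀ ZMod 2) →ₗ[ZMod 2] (Finset (Fin 4) →₀ ZMod 2) :=
  Finsupp.lsum (ZMod 2) (fun σ =>
    LinearMap.toSpanSingleton (ZMod 2) (Finset (Fin 4) →₀ ZMod 2) (simplexBoundary σ))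

/-- The Delaunay-Rips scale of each simplex of the 4-point configuration
`a = 0 = (−1,0)`, `b = 1 = (1/2,√3/2)`, `c = 2 = (1/2,−√3/2)`, `d = 3 = (1−x,0)`:
vertices enter at scale `0`, edges `bd, cd` at `√(1−x+x²)`, edges `ab, ac` at
`√3`, and edge `ad` and triangles `abd, acd` at `2 − x`. -/
noncomputable def scale (x : ℝ) (σ : Finset (Fin 4)) : ℝ :=
  if σ.card ≤ 1 then 0
  else if σ = {1, 3} ∨ σ = {2, 3} then Real.sqrt (1 - x + x ^ 2)
  else if σ = {0, 1} ∨ σ = {0, 2} then Real.sqrt 3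
  else 2 - x

/-- The Delaunay-Rips sublevel complex at scale `t` of the 4-point configuration
(the Delaunay triangulation consists of the triangles `abd`, `acd` and their faces). -/
def sublevel (x t : ℝ) : Set (Finset (Fin 4)) :=
  {σ | (σ = {0} ∨ σ = {1} ∨ σ = {2} ∨ σ = {3} ∨
        σ = {1, 3} ∨ σ = {2, 3} ∨ σ = {0, 1} ∨ σ = {0, 2} ∨ σ = {0, 3} ∨
        σ = {0, 1, 3} ∨ σ = {0, 2, 3}) ∧ scale x σ ≤ t}

/-- The 1-cycles of the sublevel complex at scale `t`: chains supported on its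
edges that are killed by the boundary map. -/
noncomputable def Z1 (x t : ℝ) : Submodule (ZMod 2) (Finset (Fin 4) →₀ ZMod 2) :=
  Finsupp.supported (ZMod 2) (ZMod 2) {σ | σ ∈ sublevel x t ∧ σ.card = 2} ⊓
    LinearMap.ker boundaryMap

/-- The 1-boundaries of the sublevel complex at scale `t`: boundaries of chains
supported on its triangles. -/
noncomputable def B1 (x t : ℝ) : Submodule (ZMod 2) (Finset (Fin 4) →₀ ZMod 2) :=
  Submodule.map boundaryMap
    (Finsupp.supported (ZMod 2) (ZMod 2) {σ | σ ∈ sublevel x t ∧ σ.card = 3})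

/-- The cycle `ab + bd + cd + ac`. -/
noncomputable def sqCycle : Finset (Fin 4) →₀ ZMod 2 :=
  Finsupp.single {0, 1} 1 + Finsupp.single {1, 3} 1 +
    Finsupp.single {2, 3} 1 + Finsupp.single {0, 2} 1

/- ====================== auxiliary lemmas ====================== -/

lemma bm_single (σ : Finset (Fin 4)) (r : ZMod 2) :
    boundaryMap (Finsupp.single σ r) = r • simplexBoundary σ := by
  simp [boundaryMap]

lemma sb01 : simplexBoundary {0,1} = Finsupp.single {1} 1 + Finsupp.single {0} 1 := by
  rw [simplexBoundary, show ({0,1} : Finset (Fin 4)) = insert 0 {1} from rfl,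
    Finset.sum_insert (by decide), Finset.sum_singleton,
    show (insert 0 ({1} : Finset (Fin 4))).erase 0 = {1} from by decide,
    show (insert 0 ({1} : Finset (Fin 4))).erase 1 = {0} from by decide]

lemma sb02 : simplexBoundary {0,2} = Finsupp.single {2} 1 + Finsupp.single {0} 1 := by
  rw [simplexBoundary, show ({0,2} : Finset (Fin 4)) = insert 0 {2} from rfl,
    Finset.sum_insert (by decide), Finset.sum_singleton,
    show (insert 0 ({2} : Finset (Fin 4))).erase 0 = {2} from by decide,
    show (insert 0 ({2} : Finset (Fin 4))).erase 2 = {0} from by decide]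

lemma sb03 : simplexBoundary {0,3} = Finsupp.single {3} 1 + Finsupp.single {0} 1 := by
  rw [simplexBoundary, show ({0,3} : Finset (Fin 4)) = insert 0 {3} from rfl,
    Finset.sum_insert (by decide), Finset.sum_singleton,
    show (insert 0 ({3} : Finset (Fin 4))).erase 0 = {3} from by decide,
    show (insert 0 ({3} : Finset (Fin 4))).erase 3 = {0} from by decide]

lemma sb13 : simplexBoundary {1,3} = Finsupp.single {3} 1 + Finsupp.single {1} 1 := by
  rw [simplexBoundary, show ({1,3} : Finset (Fin 4)) = insert 1 {3} from rfl,
    Finset.sum_insert (by decide), Finset.sum_singleton,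
    show (insert 1 ({3} : Finset (Fin 4))).erase 1 = {3} from by decide,
    show (insert 1 ({3} : Finset (Fin 4))).erase 3 = {1} from by decide]

lemma sb23 : simplexBoundary {2,3} = Finsupp.single {3} 1 + Finsupp.single {2} 1 := by
  rw [simplexBoundary, show ({2,3} : Finset (Fin 4)) = insert 2 {3} from rfl,
    Finset.sum_insert (by decide), Finset.sum_singleton,
    show (insert 2 ({3} : Finset (Fin 4))).erase 2 = {3} from by decide,
    show (insert 2 ({3} : Finset (Fin 4))).erase 3 = {2} from by decide]

lemma sb013 : simplexBoundary {0,1,3} =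
    Finsupp.single {1,3} 1 + (Finsupp.single {0,3} 1 + Finsupp.single {0,1} 1) := by
  rw [simplexBoundary, show ({0,1,3} : Finset (Fin 4)) = insert 0 (insert 1 {3}) from rfl,
    Finset.sum_insert (by decide), Finset.sum_insert (by decide), Finset.sum_singleton,
    show (insert 0 (insert 1 ({3} : Finset (Fin 4)))).erase 0 = {1,3} from by decide,
    show (insert 0 (insert 1 ({3} : Finset (Fin 4)))).erase 1 = {0,3} from by decide,
    show (insert 0 (insert 1 ({3} : Finset (Fin 4)))).erase 3 = {0,1} from by decide]

lemma sb023 : simplexBoundary {0,2,3} =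
    Finsupp.single {2,3} 1 + (Finsupp.single {0,3} 1 + Finsupp.single {0,2} 1) := by
  rw [simplexBoundary, show ({0,2,3} : Finset (Fin 4)) = insert 0 (insert 2 {3}) from rfl,
    Finset.sum_insert (by decide), Finset.sum_insert (by decide), Finset.sum_singleton,
    show (insert 0 (insert 2 ({3} : Finset (Fin 4)))).erase 0 = {2,3} from by decide,
    show (insert 0 (insert 2 ({3} : Finset (Fin 4)))).erase 2 = {0,3} from by decide,
    show (insert 0 (insert 2 ({3} : Finset (Fin 4)))).erase 3 = {0,2} from by decide]

lemma scale01 (x : ℝ) : scale x {0,1} = Real.sqrt 3 := by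
  rw [scale, if_neg (by decide), if_neg (by decide), if_pos (by decide)]

lemma scale02 (x : ℝ) : scale x {0,2} = Real.sqrt 3 := by
  rw [scale, if_neg (by decide), if_neg (by decide), if_pos (by decide)]

lemma scale13 (x : ℝ) : scale x {1,3} = Real.sqrt (1 - x + x ^ 2) := by
  rw [scale, if_neg (by decide), if_pos (by decide)]

lemma scale23 (x : ℝ) : scale x {2,3} = Real.sqrt (1 - x + x ^ 2) := by
  rw [scale, if_neg (by decide), if_pos (by decide)]

lemma scale03 (x : ℝ) : scale x {0,3} = 2 - x := by
  rw [scale, if_neg (by decide), if_neg (by decide), if_neg (by decide)]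

lemma scale013 (x : ℝ) : scale x {0,1,3} = 2 - x := by
  rw [scale, if_neg (by decide), if_neg (by decide), if_neg (by decide)]

lemma scale023 (x : ℝ) : scale x {0,2,3} = 2 - x := by
  rw [scale, if_neg (by decide), if_neg (by decide), if_neg (by decide)]

lemma repr4 (S : Finset (Finset (Fin 4))) (c : Finset (Fin 4) →₀ ZMod 2)
    (h : ∀ σ ∈ c.support, σ ∈ S) : c = ∑ e ∈ S, Finsupp.single e (c e) := by
  ext b
  rw [Finset.sum_apply']
  simp only [Finsupp.single_apply]
  rw [Finset.sum_congr rfl (fun x _ =>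
    show (if x = b then c x else 0) = if x = b then c b else 0 from by split <;> simp_all)]
  rw [Finset.sum_ite_eq' S b (fun _ => c b)]
  by_cases hb : b ∈ S
  · simp [hb]
  · simp [hb]
    exact Finsupp.notMem_support_iff.mp (fun hs => hb (h b hs))

lemma zmod2_two (a b : ZMod 2) : a + b = 0 → b = a := by revert a b; decide

lemma zmod2_three (a b c : ZMod 2) : a + b + c = 0 → c = a + b := by revert a b c; decide

lemma zmod2_cases (a : ZMod 2) : a = 0 ∨ a = 1 := by revert a; decide

/-- For `0 < x < 2 − √3`, the first mod-2 homology of the sublevel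
complex of the Delaunay-Rips filtration of the 4-point configuration is trivial
for `t < √3`, one-dimensional and generated by the cycle `ab + bd + cd + ac`
for `√3 ≤ t < 2 − x`, and trivial for `t ≥ 2 − x`. -/
theorem four_point_H1 (x : ℝ) (hx0 : 0 < x) (hx1 : x < 2 - Real.sqrt 3) (t : ℝ) :
    (t < Real.sqrt 3 → Z1 x t ≤ B1 x t) ∧
    (Real.sqrt 3 ≤ t → t < 2 - x →
      (sqCycle ∈ Z1 x t ∧ sqCycle ∉ B1 x t ∧
        ∀ c ∈ Z1 x t, c ∈ B1 x t ∨ c - sqCycle ∈ B1 x t)) ∧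
    (2 - x ≤ t → Z1 x t ≤ B1 x t) := by
  have hs2 : Real.sqrt 3 < 2 - x := by linarith
  have hx2 : x < 2 := by have := Real.sqrt_nonneg 3; linarith
  have hw3 : Real.sqrt (1 - x + x ^ 2) ≤ Real.sqrt 3 := Real.sqrt_le_sqrt (by nlinarith)
  refine ⟨?_, ?_, ?_⟩
  · -- t < √3 : Z1 = 0
    intro ht c hc
    obtain ⟨hsupp, hker⟩ := hc
    have hS : ∀ σ ∈ c.support, σ ∈ ({{1,3}, {2,3}} : Finset (Finset (Fin 4))) := by
      intro σ hσ
      obtain ⟨⟨h11, hle⟩, hcard⟩ := hsupp hσ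
      rcases h11 with h|h|h|h|h|h|h|h|h|h|h <;> subst h <;>
        first
          | decide
          | (exfalso; revert hcard; decide)
          | (exfalso
             first
               | rw [scale01] at hle
               | rw [scale02] at hle
               | rw [scale03] at hle
             linarith)
    have hc : c = Finsupp.single {1,3} (c {1,3}) + Finsupp.single {2,3} (c {2,3}) := by
      have := repr4 _ c hS
      rwa [Finset.sum_insert (by decide), Finset.sum_singleton] at this
    have hker' : boundaryMap c = 0 := hker
    rw [hc, map_add, bm_single, bm_single, sb13, sb23] at hker'
    have h1 := congrArg (fun f => f ({1} : Finset (Fin 4))) hker'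
    have h2 := congrArg (fun f => f ({2} : Finset (Fin 4))) hker'
    simp only [Finsupp.add_apply, Finsupp.smul_apply, Finsupp.single_apply, smul_eq_mul,
      Finsupp.coe_zero, Pi.zero_apply] at h1 h2
    have h1' : c {1,3} = 0 := by simpa using h1
    have h2' : c {2,3} = 0 := by simpa using h2
    rw [hc, h1', h2']
    simp only [Finsupp.single_zero, add_zero]
    exact (B1 x t).zero_mem
  · -- √3 ≤ t < 2 - x
    intro h3t ht2
    have hsqZ : sqCycle ∈ Z1 x t := by
      constructor
      · refine Submodule.add_mem _ (Submodule.add_mem _ (Submodule.add_mem _ ?_ ?_) ?_) ?_ <;>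
          apply Finsupp.single_mem_supported
        · exact ⟨⟨by tauto, by rw [scale01]; exact h3t⟩, by decide⟩
        · exact ⟨⟨by tauto, by rw [scale13]; exact le_trans hw3 h3t⟩, by decide⟩
        · exact ⟨⟨by tauto, by rw [scale23]; exact le_trans hw3 h3t⟩, by decide⟩
        · exact ⟨⟨by tauto, by rw [scale02]; exact h3t⟩, by decide⟩
      · have : boundaryMap sqCycle = 0 := by
          rw [sqCycle, map_add, map_add, map_add, bm_single, bm_single, bm_single, bm_single,
            sb01, sb13, sb23, sb02, one_smul, one_smul, one_smul, one_smul]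
          have key : ∀ u v w z : Finset (Fin 4) →₀ ZMod 2,
              (u + v) + (w + u) + (w + z) + (z + v) = (u + u) + (v + v) + (w + w) + (z + z) := by
            intros; abel
          rw [key]
          have h2 : ∀ u : Finset (Fin 4) →₀ ZMod 2, u + u = 0 := by
            intro u
            rw [← two_smul (ZMod 2) u, show (2 : ZMod 2) = 0 from rfl, zero_smul]
          simp only [h2]
        exact this
    have hB1bot : B1 x t = ⊥ := by
      have hempty : {σ : Finset (Fin 4) | σ ∈ sublevel x t ∧ σ.card = 3} = ∅ := by
        ext σ
        simp only [Set.mem_setOf_eq, Set.mem_empty_iff_false, iff_false, not_and]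
        rintro ⟨h11, hle⟩
        rcases h11 with h|h|h|h|h|h|h|h|h|h|h <;> subst h <;>
          first
            | decide
            | (intro _
               first
                 | rw [scale013] at hle
                 | rw [scale023] at hle
               linarith)
      rw [B1, hempty, Finsupp.supported_empty, Submodule.map_bot]
    refine ⟨hsqZ, ?_, ?_⟩
    · rw [hB1bot]
      simp only [Submodule.mem_bot]
      intro h
      have h01 := congrArg (fun f => f ({0,1} : Finset (Fin 4))) h
      simp only [sqCycle, Finsupp.add_apply, Finsupp.single_apply, Finsupp.coe_zero,
        Pi.zero_apply, show ({1,3}:Finset (Fin 4)) ≠ {0,1} from by decide,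
        show ({2,3}:Finset (Fin 4)) ≠ {0,1} from by decide,
        show ({0,2}:Finset (Fin 4)) ≠ {0,1} from by decide, if_pos rfl, if_neg,
        ite_false, add_zero, not_false_eq_true] at h01
      exact one_ne_zero h01
    · intro c hc
      obtain ⟨hsupp, hker⟩ := hc
      have hS : ∀ σ ∈ c.support,
          σ ∈ ({{0,1}, {0,2}, {1,3}, {2,3}} : Finset (Finset (Fin 4))) := by
        intro σ hσ
        obtain ⟨⟨h11, hle⟩, hcard⟩ := hsupp hσ
        rcases h11 with h|h|h|h|h|h|h|h|h|h|h <;> subst h <;>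
          first
            | decide
            | (exfalso; revert hcard; decide)
            | (exfalso; rw [scale03] at hle; linarith)
      have hc : c = Finsupp.single {0,1} (c {0,1}) + Finsupp.single {0,2} (c {0,2}) +
          Finsupp.single {1,3} (c {1,3}) + Finsupp.single {2,3} (c {2,3}) := by
        have := repr4 _ c hS
        rwa [Finset.sum_insert (by decide), Finset.sum_insert (by decide),
          Finset.sum_insert (by decide), Finset.sum_singleton, ← add_assoc, ← add_assoc] at this
      have hker' : boundaryMap c = 0 := hker
      rw [hc, map_add, map_add, map_add, bm_single, bm_single, bm_single, bm_single,
        sb01, sb02, sb13, sb23] at hker'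
      have h0 := congrArg (fun f => f ({0} : Finset (Fin 4))) hker'
      have h1 := congrArg (fun f => f ({1} : Finset (Fin 4))) hker'
      have h2 := congrArg (fun f => f ({2} : Finset (Fin 4))) hker'
      simp only [Finsupp.add_apply, Finsupp.smul_apply, Finsupp.single_apply, smul_eq_mul,
        Finsupp.coe_zero, Pi.zero_apply] at h0 h1 h2
      have e0 : c {0,1} + c {0,2} = 0 := by simpa using h0
      have e1 : c {0,1} + c {1,3} = 0 := by simpa using h1
      have e2 : c {0,2} + c {2,3} = 0 := by simpa using h2
      have hβ : c {0,2} = c {0,1} := zmod2_two _ _ e0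
      have hγ : c {1,3} = c {0,1} := zmod2_two _ _ e1
      have hδ : c {2,3} = c {0,2} := zmod2_two _ _ e2
      rcases zmod2_cases (c {0,1}) with hα | hα
      · left
        rw [hc, hβ, hγ, hδ, hβ, hα]
        simp only [Finsupp.single_zero, add_zero]
        exact (B1 x t).zero_mem
      · right
        have : c - sqCycle = 0 := by
          rw [hc, hβ, hγ, hδ, hβ, hα, sqCycle, sub_eq_zero]
          abel
        rw [this]
        exact (B1 x t).zero_mem
  · -- t ≥ 2 - x
    intro ht c hc
    obtain ⟨hsupp, hker⟩ := hc
    have hS : ∀ σ ∈ c.support,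
        σ ∈ ({{0,1}, {0,2}, {0,3}, {1,3}, {2,3}} : Finset (Finset (Fin 4))) := by
      intro σ hσ
      obtain ⟨⟨h11, hle⟩, hcard⟩ := hsupp hσ
      rcases h11 with h|h|h|h|h|h|h|h|h|h|h <;> subst h <;>
        first
          | decide
          | (exfalso; revert hcard; decide)
    have hc : c = Finsupp.single {0,1} (c {0,1}) + Finsupp.single {0,2} (c {0,2}) +
        Finsupp.single {0,3} (c {0,3}) + Finsupp.single {1,3} (c {1,3}) +
        Finsupp.single {2,3} (c {2,3}) := by
      have := repr4 _ c hS
      rwa [Finset.sum_insert (by decide), Finset.sum_insert (by decide),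
        Finset.sum_insert (by decide), Finset.sum_insert (by decide), Finset.sum_singleton,
        ← add_assoc, ← add_assoc, ← add_assoc] at this
    have hker' : boundaryMap c = 0 := hker
    rw [hc, map_add, map_add, map_add, map_add, bm_single, bm_single, bm_single, bm_single,
      bm_single, sb01, sb02, sb03, sb13, sb23] at hker'
    have h0 := congrArg (fun f => f ({0} : Finset (Fin 4))) hker'
    have h1 := congrArg (fun f => f ({1} : Finset (Fin 4))) hker'
    have h2 := congrArg (fun f => f ({2} : Finset (Fin 4))) hker'
    simp only [Finsupp.add_apply, Finsupp.smul_apply, Finsupp.single_apply, smul_eq_mul,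
      Finsupp.coe_zero, Pi.zero_apply] at h0 h1 h2
    have e0 : c {0,1} + c {0,2} + c {0,3} = 0 := by simpa [add_assoc] using h0
    have e1 : c {0,1} + c {1,3} = 0 := by simpa using h1
    have e2 : c {0,2} + c {2,3} = 0 := by simpa using h2
    have hε : c {0,3} = c {0,1} + c {0,2} := zmod2_three _ _ _ e0
    have hγ : c {1,3} = c {0,1} := zmod2_two _ _ e1
    have hδ : c {2,3} = c {0,2} := zmod2_two _ _ e2
    refine Submodule.mem_map.mpr
      ⟨Finsupp.single {0,1,3} (c {0,1}) + Finsupp.single {0,2,3} (c {0,2}), ?_, ?_⟩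
    · refine Submodule.add_mem _ ?_ ?_ <;> apply Finsupp.single_mem_supported
      · exact ⟨⟨by tauto, by rw [scale013]; exact ht⟩, by decide⟩
      · exact ⟨⟨by tauto, by rw [scale023]; exact ht⟩, by decide⟩
    · rw [map_add, bm_single, bm_single, sb013, sb023]
      conv_rhs => rw [hc, hε, hγ, hδ]
      rw [Finsupp.single_add]
      simp only [smul_add, Finsupp.smul_single', mul_one]
      abel
end

section
/- If f, g: K → ℝ are monotonic functions on a finite simplicial complex K inducing filtrations with the same underlying complex, and additionally P, P' are point clouds with common Delaunay triangulation K (under a perturbation pairing) with f = f_P and g = f_{P'} the Delaunay-Rips diameter scale functions, then for each dimension p the bottleneck distance between the p-persistence diagrams satisfies W_∞(Dgm_p(f_P), Dgm_p(f_{P'})) ≤ 2 d_H(P, P'), assuming the standard stability theorem W_∞(Dgm_p(f), Dgm_p(g)) ≤ ‖f − g‖_∞. -/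
open Metric

/-- The Delaunay triangulation of an indexed point cloud `p : Fin n → ℝ^D`,
recorded as a complex on the index set. -/
def delaunayIdx {D n : ℕ} (p : Fin n → EuclideanSpace ℝ (Fin D)) :
    Set (Finset (Fin n)) :=
  {σ | σ.Nonempty ∧
    (⋂ i ∈ (σ : Set (Fin n)), {q : EuclideanSpace ℝ (Fin D) | ∀ j, dist q (p i) ≤ dist q (p j)}).Nonempty}

/-- Hausdorff stability of Delaunay-Rips persistence diagrams.
Let `P, P'` (given by `p, p' : Fin n → ℝ^D`) be an ε-perturbation pair with the
same Delaunay triangulation `K` (under the pairing `i ↦ i`), and let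
`f_P, f_{P'}` be the Delaunay-Rips diameter scale functions on `K`.  Assume the
standard stability theorem: for any two scale functions, the bottleneck distance
of the associated `p`-persistence diagrams is bounded by any uniform bound on
the difference of the scale functions over `K`.  Then
`W_∞(Dgm_p(f_P), Dgm_p(f_{P'})) ≤ 2 d_H(P, P')`. -/
theorem delaunayRips_stability
    {D n : ℕ} (p p' : Fin n → EuclideanSpace ℝ (Fin D))
    (ε : ℝ) (hε : 0 < ε)
    (hclose : ∀ i, dist (p i) (p' i) < ε)
    (huniq1 : ∀ i j, dist (p i) (p' j) < ε → j = i)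
    (K : Set (Finset (Fin n)))
    (hKP : delaunayIdx p = K) (hKP' : delaunayIdx p' = K)
    (Diagram : Type*)
    (Dgm : (Finset (Fin n) → ℝ) → Diagram)
    (W : Diagram → Diagram → ℝ)
    (hstab : ∀ (f g : Finset (Fin n) → ℝ) (c : ℝ),
      (∀ σ ∈ K, |f σ - g σ| ≤ c) → W (Dgm f) (Dgm g) ≤ c) :
    W (Dgm (fun σ => Metric.diam (p '' (σ : Set (Fin n)))))
      (Dgm (fun σ => Metric.diam (p' '' (σ : Set (Fin n)))))
      ≤ 2 * hausdorffDist (Set.range p) (Set.range p') := by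
  set dH := hausdorffDist (Set.range p) (Set.range p') with hdH
  apply hstab
  intro σ hσ
  -- σ is nonempty
  have hσne : σ.Nonempty := by
    rw [← hKP] at hσ; exact hσ.1
  obtain ⟨i0, hi0⟩ := hσne
  haveI : Nonempty (Fin n) := ⟨i0⟩
  have hrne : (Set.range p).Nonempty := Set.range_nonempty p
  have hrne' : (Set.range p').Nonempty := Set.range_nonempty p'
  have hbd : Bornology.IsBounded (Set.range p) := (Set.finite_range p).isBounded
  have hbd' : Bornology.IsBounded (Set.range p') := (Set.finite_range p').isBounded
  have hne_top : EMetric.hausdorffEdist (Set.range p) (Set.range p') ≠ ⊤ :=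
    Metric.hausdorffEdist_ne_top_of_nonempty_of_bounded hrne hrne' hbd hbd'
  have hne_top' : EMetric.hausdorffEdist (Set.range p') (Set.range p) ≠ ⊤ := by
    rw [EMetric.hausdorffEdist, Metric.hausdorffEDist_comm]; exact hne_top
  -- key: each displacement is bounded by dH
  have hdisp : ∀ i : Fin n, dist (p i) (p' i) ≤ dH := by
    intro i
    have h1 : infDist (p i) (Set.range p') ≤ dH :=
      infDist_le_hausdorffDist_of_mem (Set.mem_range_self i) hne_top
    obtain ⟨y, hy, hyd⟩ := ((Set.finite_range p').isCompact).exists_infDist_eq_dist hrne' (p i)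
    obtain ⟨j, rfl⟩ := hy
    rcases le_or_gt ε (dist (p i) (p' j)) with h | h
    · -- then infDist ≥ ε > dist (p i) (p' i)
      calc dist (p i) (p' i) ≤ ε := (hclose i).le
        _ ≤ dist (p i) (p' j) := h
        _ = infDist (p i) (Set.range p') := hyd.symm
        _ ≤ dH := h1
    · have hji : j = i := huniq1 i j h
      rw [hji] at hyd
      calc dist (p i) (p' i) = infDist (p i) (Set.range p') := hyd.symm
        _ ≤ dH := h1
  have hdH0 : 0 ≤ dH := hausdorffDist_nonneg
  -- diam comparison
  have hbσ : Bornology.IsBounded (p '' (σ : Set (Fin n))) :=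
    hbd.subset (Set.image_subset_range _ _)
  have hbσ' : Bornology.IsBounded (p' '' (σ : Set (Fin n))) :=
    hbd'.subset (Set.image_subset_range _ _)
  have key : ∀ (q q' : Fin n → EuclideanSpace ℝ (Fin D)),
      (∀ i, dist (q i) (q' i) ≤ dH) →
      Metric.diam (q '' (σ : Set (Fin n))) ≤ Metric.diam (q' '' (σ : Set (Fin n))) + 2 * dH := by
    intro q q' hq
    have hbq' : Bornology.IsBounded (q' '' (σ : Set (Fin n))) :=
      ((σ : Set (Fin n)).toFinite.image q').isBounded
    apply Metric.diam_le_of_forall_dist_le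
      (by positivity)
    rintro x ⟨i, hi, rfl⟩ y ⟨j, hj, rfl⟩
    calc dist (q i) (q j)
        ≤ dist (q i) (q' i) + dist (q' i) (q' j) + dist (q' j) (q j) := dist_triangle4 _ _ _ _
      _ ≤ dH + Metric.diam (q' '' (σ : Set (Fin n))) + dH := by
          gcongr
          · exact hq i
          · exact Metric.dist_le_diam_of_mem hbq' (Set.mem_image_of_mem _ hi)
              (Set.mem_image_of_mem _ hj)
          · rw [dist_comm]; exact hq j
      _ = Metric.diam (q' '' (σ : Set (Fin n))) + 2 * dH := by ring
  have h1 := key p p' hdisp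
  have h2 := key p' p (fun i => by rw [dist_comm]; exact hdisp i)
  rw [abs_sub_le_iff]
  constructor <;> linarith
end
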